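/- Let G be a connected chordal graph with no strict comb of cliques, let K_0 be a maximal clique of G, and suppose G ≠ K_0. Then for every component C of G − K_0 there is a maximal clique K of G containing N(C) ∪ {v} for some vertex v ∈ C. -/

import Mathlib

open SimpleGraph

variable {V W : Type*}

/-- `G` contains no induced cycle of length at least four. -/
def IsChordal (G : SimpleGraph V) : Prop :=
  ∀ (n : ℕ), 4 ≤ n → ∀ f : ZMod n → V, Function.Injective f →
    (∀ i j : ZMod n, G.Adj (f i) (f j) ↔ j = i + 1 ∨ i = j + 1) → False

/-- The set of vertices outside `C` having a neighbour in `C`. -/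
def nbhdSet (G : SimpleGraph V) (C : Set V) : Set V :=
  {v | v ∉ C ∧ ∃ u ∈ C, G.Adj u v}

/-- `C` is a connected component of `G - S`. -/
def IsCompOutside (G : SimpleGraph V) (S C : Set V) : Prop :=
  C.Nonempty ∧ Disjoint C S ∧ (G.induce C).Connected ∧
    ∀ u ∈ C, ∀ v, G.Adj u v → v ∉ S → v ∈ C

/-- A strict comb of cliques. -/
def HasStrictCombOfCliques (G : SimpleGraph V) : Prop :=
  ∃ v : ℕ → V, Function.Injective v ∧ (∀ i j, i ≠ j → G.Adj (v i) (v j)) ∧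
    ∀ i : ℕ, 0 < i → ∃ w, (∀ j, j < i → G.Adj w (v j)) ∧ (∀ j, i ≤ j → ¬ G.Adj w (v j))

/-- Every walk from `A` to `B` meets `S`. -/
def Separates (G : SimpleGraph V) (A B S : Set V) : Prop :=
  ∀ a ∈ A, ∀ b ∈ B, ∀ p : G.Walk a b, ∃ x ∈ p.support, x ∈ S

/-- `S` is a minimal `A`–`B` separator. -/
def IsMinimalSeparator (G : SimpleGraph V) (A B S : Set V) : Prop :=
  Separates G A B S ∧ ∀ S' ⊆ S, Separates G A B S' → S' = S

/-- `S` is a minimal `a`–`b` separator (containing neither `a` nor `b`). -/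
def IsMinimalVxSeparator (G : SimpleGraph V) (a b : V) (S : Set V) : Prop :=
  a ∉ S ∧ b ∉ S ∧ Separates G {a} {b} S ∧ ∀ S' ⊆ S, Separates G {a} {b} S' → S' = S

/-- A tree-decomposition of `G` with decomposition tree `T` and bags `bag`. -/
def IsTreeDecomp {ι : Type*} (G : SimpleGraph V) (T : SimpleGraph ι) (bag : ι → Set V) : Prop :=
  T.IsTree ∧ (∀ v, ∃ t, v ∈ bag t) ∧
    (∀ u v, G.Adj u v → ∃ t, u ∈ bag t ∧ v ∈ bag t) ∧
    ∀ v, (T.induce {t | v ∈ bag t}).Connected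

/-- `H` is an induced minor of `G`. -/
def IsInducedMinor (H : SimpleGraph W) (G : SimpleGraph V) : Prop :=
  ∃ B : W → Set V, (∀ w, (B w).Nonempty) ∧ (∀ w, (G.induce (B w)).Connected) ∧
    (Pairwise fun u w => Disjoint (B u) (B w)) ∧
    ∀ u w, u ≠ w → ((∃ x ∈ B u, ∃ y ∈ B w, G.Adj x y) ↔ H.Adj u w)

/-- The graph `𝓗`: a countably infinite clique together with two non-adjacent
dominating vertices. -/
def HGraph : SimpleGraph (ℕ ⊕ Bool) where
  Adj x y := match x, y with
    | .inl i, .inl j => i ≠ j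
    | .inl _, .inr _ => True
    | .inr _, .inl _ => True
    | .inr _, .inr _ => False
  symm := by
    constructor
    rintro (i | a) (j | b) h <;> simp_all
    exact fun h' => h h'.symm
  loopless := by
    constructor
    rintro (i | a) h <;> simp_all

/-- `u` lies on the path from `r` to `v` in the tree `T`; this is the tree-order. -/
def TreeLE (T : SimpleGraph V) (r u v : V) : Prop :=
  ∀ p : T.Walk r v, p.IsPath → u ∈ p.support

/-- `T` is a normal spanning tree of `G` with root `r`. -/
def IsNormalSpanningTree (G T : SimpleGraph V) (r : V) : Prop :=
  T ≤ G ∧ T.IsTree ∧ ∀ u v, G.Adj u v → TreeLE T r u v ∨ TreeLE T r v u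

/-!
Let `C` be a component of `G - K₀`; its neighbourhood `N(C) ⊆ K₀` is a clique. Chordality gives,
for `w ∈ C` and `s ∈ N(C)`, a vertex `w' ∈ C` adjacent to `s` that sees every vertex of `N(C)` seen
by `w`: take `w'` to be the last vertex before `s` on a shortest path from `w` to `s` through `C`.
A neighbour `t ∈ N(C)` of `w` missed by `w'` would close, with the end of that path and the edge
`st`, an induced cycle of length at least four.

If no vertex of `C` saw all of `N(C)`, we could iterate: `s_k ∈ N(C)` is a vertex missed by `w_k`
and `w_{k+1}` is obtained from `w_k` and `s_k` as above. Then `w_i` sees `s_j` exactly for `j < i`,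
so the `s_k` and `w_k` form a strict comb of cliques. Hence some `v ∈ C` sees all of `N(C)`, and
Zorn's lemma extends the clique `N(C) ∪ {v}` to a maximal one.
-/

section

variable {G : SimpleGraph V}

theorem SimpleGraph.IsClique.exists_maximal_superset {s : Set V} (hs : G.IsClique s) :
    ∃ K, Maximal G.IsClique K ∧ s ⊆ K := by
  obtain ⟨K, hsK, hK⟩ := zorn_subset_nonempty {t | G.IsClique t}
    (fun c hc hchain _ => ⟨⋃₀ c, (isClique_sUnion hchain.directedOn).2 hc,
      fun _ => Set.subset_sUnion_of_mem⟩) s hs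
  exact ⟨K, hK, hsK⟩

def IsChordlessWalk (G : SimpleGraph V) (f : ℕ → V) (L : ℕ) : Prop :=
  ∀ a ≤ L, ∀ b ≤ L, G.Adj (f a) (f b) ↔ a + 1 = b ∨ b + 1 = a

theorem IsChordlessWalk.injOn {f : ℕ → V} {L : ℕ} (hf : IsChordlessWalk G f L)
    (hlast : ∀ j < L, f j ≠ f L) : Set.InjOn f (Set.Iic L) := by
  have key : ∀ a b, a < b → b ≤ L → f a ≠ f b := by
    intro a b hab hb heq
    rcases hb.lt_or_eq with hb | rfl
    · have hadj : G.Adj (f (b + 1)) (f a) := by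
        rw [heq]; exact (hf (b + 1) hb b hb.le).2 (Or.inr rfl)
      have := (hf (b + 1) hb a (by omega)).1 hadj
      omega
    · exact hlast a hab heq
  intro a ha b hb heq
  rcases lt_trichotomy a b with h | h | h
  · exact absurd heq (key a b h hb)
  · exact h
  · exact absurd heq.symm (key b a h ha)

-- `f 0, …, f L, t` would be an induced cycle of length `L + 2`.
theorem IsChordal.le_one_of_isChordlessWalk (hG : IsChordal G) {f : ℕ → V} {L : ℕ} {t : V}
    (hf : IsChordlessWalk G f L) (hinj : Set.InjOn f (Set.Iic L)) (ht : ∀ j ≤ L, f j ≠ t)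
    (htf : ∀ j ≤ L, G.Adj (f j) t ↔ j = 0 ∨ j = L) : L ≤ 1 := by
  by_contra! hL
  have : NeZero (L + 2) := ⟨by omega⟩
  set g : ℕ → V := fun j => if j ≤ L then f j else t with hg
  have hmod : ∀ a < L + 2, (a + 1) % (L + 2) = if a = L + 1 then 0 else a + 1 := by
    intro a ha
    split_ifs with h
    · simp [h]
    · exact Nat.mod_eq_of_lt (by omega)
  have hsucc : ∀ i j : ZMod (L + 2), j = i + 1 ↔ j.val = (i.val + 1) % (L + 2) := by
    intro i j
    rw [← (ZMod.val_injective _).eq_iff, ZMod.val_add, ZMod.val_one'' (by omega)]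
  refine hG (L + 2) (by omega) (fun i => g i.val) ?_ ?_
  · intro i j hij
    apply ZMod.val_injective
    have hi := i.val_lt
    have hj := j.val_lt
    simp only [hg] at hij
    split_ifs at hij with h1 h2 h2
    · exact hinj h1 h2 hij
    · exact absurd hij (ht _ h1)
    · exact absurd hij.symm (ht _ h2)
    · omega
  · intro i j
    rw [hsucc, hsucc, hmod _ i.val_lt, hmod _ j.val_lt]
    have hi := i.val_lt
    have hj := j.val_lt
    generalize i.val = a at *
    generalize j.val = b at *
    rcases Nat.lt_or_ge L a with ha | ha <;> rcases Nat.lt_or_ge L b with hb | hb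
    · simp only [hg, if_neg ha.not_ge, if_neg hb.not_ge, G.irrefl, false_iff]
      split_ifs <;> omega
    · simp only [hg, if_neg ha.not_ge, if_pos hb]
      rw [G.adj_comm, htf b hb]
      split_ifs <;> omega
    · simp only [hg, if_pos ha, if_neg hb.not_ge]
      rw [htf a ha]
      split_ifs <;> omega
    · simp only [hg, if_pos ha, if_pos hb]
      rw [hf a ha b hb]
      split_ifs <;> omega

theorem exists_shorter_walk_of_adj {f : ℕ → V} {L a b : ℕ}
    (hf : ∀ j < L, G.Adj (f j) (f (j + 1))) (hab : a + 1 < b) (hb : b ≤ L)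
    (hadj : G.Adj (f a) (f b)) :
    ∃ g : ℕ → V, ∃ L' < L, (∀ j < L', G.Adj (g j) (g (j + 1))) ∧ g 0 = f 0 ∧ g L' = f L ∧
      ∀ j < L', ∃ i < L, g j = f i := by
  refine ⟨fun j => if j ≤ a then f j else f (j + (b - a - 1)), L - (b - a - 1), by omega,
    fun j hj => ?_, by simp, ?_, fun j hj => ?_⟩ <;> dsimp only
  · rcases lt_trichotomy j a with h | rfl | h
    · simpa only [if_pos h.le, if_pos (show j + 1 ≤ j + 1 + (a - j - 1) by omega),
        if_pos (show j + 1 ≤ a by omega)] using hf j (by omega)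
    · simpa only [le_refl, if_pos, if_neg (Nat.not_succ_le_self j),
        show j + 1 + (b - j - 1) = b by omega] using hadj
    · simpa only [if_neg (Nat.not_le.2 h), if_neg (show ¬ j + 1 ≤ a by omega),
        show j + 1 + (b - a - 1) = j + (b - a - 1) + 1 by omega] using hf _ (by omega)
  · rw [if_neg (by omega)]
    congr 1
    omega
  · split_ifs
    · exact ⟨j, by omega, rfl⟩
    · exact ⟨j + (b - a - 1), by omega, rfl⟩

theorem exists_isChordlessWalk {C : Set V} {v s : V} (hC : (G.induce C).Connected)
    (hv : v ∈ C) (hs : ∃ u ∈ C, G.Adj u s) :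
    ∃ f : ℕ → V, ∃ L, f 0 = v ∧ f L = s ∧ (∀ j < L, f j ∈ C) ∧ IsChordlessWalk G f L := by
  classical
  have hex : ∃ L, ∃ f : ℕ → V,
      (∀ j < L, G.Adj (f j) (f (j + 1))) ∧ f 0 = v ∧ f L = s ∧ ∀ j < L, f j ∈ C := by
    obtain ⟨u, hu, hus⟩ := hs
    obtain ⟨w⟩ := hC.preconnected ⟨v, hv⟩ ⟨u, hu⟩
    refine ⟨w.length + 1, fun j => if j ≤ w.length then (w.getVert j).1 else s,
      fun j hj => ?_, by simp, by simp, fun j hj => ?_⟩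
    · rcases (Nat.lt_succ_iff.1 hj).lt_or_eq with h | rfl
      · simp only [if_pos h.le, if_pos (Nat.succ_le_of_lt h)]
        exact w.adj_getVert_succ h
      · simpa only [le_refl, if_pos, if_neg (Nat.not_succ_le_self _), Walk.getVert_length]
          using hus
    · simpa only [if_pos (Nat.lt_succ_iff.1 hj)] using (w.getVert j).2
  obtain ⟨f, hwalk, hf0, hfL, hfC⟩ := Nat.find_spec hex
  refine ⟨f, _, hf0, hfL, hfC, fun a ha b hb => ⟨fun h => ?_, ?_⟩⟩
  · by_contra! hne
    have key : ∀ a b, a + 1 < b → b ≤ Nat.find hex → ¬ G.Adj (f a) (f b) := by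
      intro a b hab hb h
      obtain ⟨g, L', hL', hg, hg0, hgL, hgC⟩ := exists_shorter_walk_of_adj hwalk hab hb h
      exact Nat.find_min hex hL' ⟨g, hg, hg0.trans hf0, hgL.trans hfL,
        fun j hj => let ⟨i, hi, e⟩ := hgC j hj; e ▸ hfC i hi⟩
    rcases lt_trichotomy a b with hab | rfl | hab
    · exact key a b (by omega) hb h
    · exact G.irrefl h
    · exact key b a (by omega) ha h.symm
  · rintro (rfl | rfl)
    · exact hwalk a (by omega)
    · exact (hwalk b (by omega)).symm

theorem IsCompOutside.nbhdSet_subset {K0 C : Set V} (hC : IsCompOutside G K0 C) :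
    nbhdSet G C ⊆ K0 := by
  rintro x ⟨hxC, u, huC, hux⟩
  by_contra hxK
  exact hxC (hC.2.2.2 u huC x hux hxK)

theorem IsChordal.exists_adj_neighborSet_inter_subset (hG : IsChordal G) {K0 C : Set V}
    (hK0 : G.IsClique K0) (hC : IsCompOutside G K0 C) {v s : V} (hv : v ∈ C)
    (hs : s ∈ nbhdSet G C) :
    ∃ w ∈ C, G.Adj w s ∧ G.neighborSet v ∩ nbhdSet G C ⊆ G.neighborSet w := by
  classical
  obtain ⟨hsC, u, hu, hus⟩ := hs
  obtain ⟨f, L, hf0, hfL, hfC, hf⟩ := exists_isChordlessWalk hC.2.2.1 hv ⟨u, hu, hus⟩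
  obtain ⟨n, rfl⟩ : ∃ n, L = n + 1 :=
    Nat.exists_eq_add_one.2 (Nat.pos_of_ne_zero fun h => hsC (hfL ▸ h ▸ hf0 ▸ hv))
  have hinj := hf.injOn fun j hj h => hsC (hfL ▸ h ▸ hfC j hj)
  have hns : G.Adj (f n) s := hfL ▸ (hf n (by omega) (n + 1) le_rfl).2 (Or.inl rfl)
  refine ⟨f n, hfC n (by omega), hns, ?_⟩
  rintro t ⟨hvt, ht⟩
  by_contra hnt
  have hst : G.Adj s t := hK0 (hC.nbhdSet_subset ⟨hsC, u, hu, hus⟩) (hC.nbhdSet_subset ht)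
    (by rintro rfl; exact hnt hns)
  set i := Nat.findGreatest (fun j => G.Adj (f j) t) n
  have hit : G.Adj (f i) t := Nat.findGreatest_spec (P := fun j => G.Adj (f j) t) (Nat.zero_le n)
    (by rw [hf0]; exact hvt)
  have hin : i < n := (Nat.findGreatest_le n).lt_of_ne fun h => hnt (h ▸ hit)
  have := hG.le_one_of_isChordlessWalk (f := fun j => f (i + j)) (L := n + 1 - i) (t := t)
    (fun a ha b hb => (hf (i + a) (by omega) (i + b) (by omega)).trans (by omega))
    (fun a (ha : a ≤ n + 1 - i) b (hb : b ≤ n + 1 - i) h => by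
      have := hinj (show i + a ≤ n + 1 by omega) (show i + b ≤ n + 1 by omega) h
      omega)
    (fun j hj h => by
      rcases (show i + j < n + 1 ∨ i + j = n + 1 by omega) with h' | h'
      · exact ht.1 (h ▸ hfC _ h')
      · rw [h', hfL] at h
        exact G.irrefl (h ▸ hst))
    (fun j hj => by
      rcases Nat.eq_zero_or_pos j with rfl | hj0
      · exact iff_of_true hit (Or.inl rfl)
      rcases (show i + j ≤ n ∨ i + j = n + 1 by omega) with h' | h'
      · exact iff_of_false
          (Nat.findGreatest_is_greatest (P := fun j => G.Adj (f j) t) (by omega) h') (by omega)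
      · rw [h', hfL]
        exact iff_of_true hst (Or.inr (by omega)))
  omega

theorem hasStrictCombOfCliques_of_exists_adj_subset {S W : Set V} (hS : G.IsClique S)
    (hW : W.Nonempty) (hnot : ∀ w ∈ W, ¬ S ⊆ G.neighborSet w)
    (hstep : ∀ w ∈ W, ∀ s ∈ S, ∃ w' ∈ W, G.Adj w' s ∧ G.neighborSet w ∩ S ⊆ G.neighborSet w') :
    HasStrictCombOfCliques G := by
  have step : ∀ w : W, ∃ w' : W, ∃ s ∈ S,
      ¬ G.Adj w s ∧ G.Adj w' s ∧ G.neighborSet w ∩ S ⊆ G.neighborSet w' := by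
    rintro ⟨w, hw⟩
    obtain ⟨s, hs, hws⟩ := Set.not_subset.1 (hnot w hw)
    obtain ⟨w', hw', h1, h2⟩ := hstep w hw s hs
    exact ⟨⟨w', hw'⟩, s, hs, hws, h1, h2⟩
  choose next σ hσS hσ hnext_adj hnext_sub using step
  obtain ⟨w0, hw0⟩ := hW
  set w : ℕ → W := fun k => next^[k] ⟨w0, hw0⟩
  have hw_succ : ∀ k, w (k + 1) = next (w k) := fun k => Function.iterate_succ_apply' _ _ _
  have hmono : Monotone fun k => G.neighborSet (w k) ∩ S := monotone_nat_of_le_succ fun k => by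
    rw [hw_succ]
    exact Set.subset_inter (hnext_sub _) Set.inter_subset_right
  have hadj : ∀ j i, j < i → G.Adj (w i) (σ (w j)) := fun j i h =>
    (hmono (Nat.succ_le_of_lt h)
      (show σ (w j) ∈ G.neighborSet (w (j + 1)) ∩ S by rw [hw_succ]; exact ⟨hnext_adj _, hσS _⟩)).1
  have hnadj : ∀ j i, i ≤ j → ¬ G.Adj (w i) (σ (w j)) := fun j i h hij =>
    hσ (w j) (hmono h ⟨hij, hσS _⟩).1
  have hinj : Function.Injective fun k => σ (w k) := by
    intro j k (h : σ (w j) = σ (w k))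
    by_contra hne
    rcases Nat.lt_or_gt_of_ne hne with hjk | hjk
    · exact hnadj k k le_rfl (h ▸ hadj j k hjk)
    · exact hnadj j j le_rfl (h ▸ hadj k j hjk)
  exact ⟨fun k => σ (w k), hinj, fun i j hij => hS (hσS _) (hσS _) (hinj.ne hij),
    fun i _ => ⟨w i, fun j => hadj j i, fun j => hnadj j i⟩⟩

end

universe u

theorem stmt19_general {V : Type u} (G : SimpleGraph V)
    (hchordal : IsChordal G) (hcomb : ¬ HasStrictCombOfCliques G)
    (K0 : Set V) (hK0 : Maximal G.IsClique K0) :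
    ∀ C : Set V, IsCompOutside G K0 C →
      ∃ v ∈ C, ∃ K : Set V, Maximal G.IsClique K ∧ nbhdSet G C ∪ {v} ⊆ K := by
  intro C hC
  have hN : G.IsClique (nbhdSet G C) := hK0.prop.subset hC.nbhdSet_subset
  obtain ⟨v, hvC, hv⟩ : ∃ v ∈ C, nbhdSet G C ⊆ G.neighborSet v := by
    by_contra! h
    exact hcomb (hasStrictCombOfCliques_of_exists_adj_subset hN hC.1 h
      fun w hw s hs => hchordal.exists_adj_neighborSet_inter_subset hK0.prop hC hw hs)
  obtain ⟨K, hK, hNK⟩ := (hN.insert fun s hs _ => hv hs).exists_maximal_superset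
  exact ⟨v, hvC, K, hK, by rwa [Set.union_singleton]⟩

theorem stmt19 {V : Type u} (G : SimpleGraph V) (hconn : G.Connected)
    (hchordal : IsChordal G) (hcomb : ¬ HasStrictCombOfCliques G)
    (K0 : Set V) (hK0 : Maximal G.IsClique K0) (hne : K0 ≠ Set.univ) :
    ∀ C : Set V, IsCompOutside G K0 C →
      ∃ v ∈ C, ∃ K : Set V, Maximal G.IsClique K ∧ nbhdSet G C ∪ {v} ⊆ K :=
  stmt19_general G hchordal hcomb K0 hK0
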